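/- arXiv:2311.04298 — 5 statements merged into one kernel-verified Lean document; each statement's English description precedes it below -/
import Mathlib

section
/- Let F(r) = E(r)⁻¹·E'(r) where E(r) = cosh(r)·I₂ + sinh(r)·[[a,b],[b,-a]] and a²+b² = λ² < 1. Then F(r) = (1 + (1-λ²)sinh²(r))⁻¹ · [[(1/2)sinh(2r)(1-λ²) + a, b], [b, (1/2)sinh(2r)(1-λ²) - a]]. In particular the trace of F(r) equals sinh(2r)(1-λ²)/(1 + (1-λ²)sinh²(r)). -/
/-!
Write `S = !![a, b; b, -a]`, so `S * S = (a² + b²) • 1`. Matrices `x • 1 + y • S` behave like the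
numbers `x + y√(a² + b²)`: the adjugate is the conjugate `x • 1 - y • S`, the determinant is the
norm `x² - (a² + b²) y²`, and products stay in the span of `1` and `S`. Hence
`E⁻¹ * E' = (det E)⁻¹ • (adj E * E')` with `det E = cosh² r - λ² sinh² r = 1 + (1 - λ²) sinh² r`
and `adj E * E' = cosh r sinh r (1 - λ²) • 1 + (cosh² r - sinh² r) • S`.
-/

open Matrix Real

section
variable {R : Type*} [CommRing R] (a b : R)

lemma smul_one_add_smul_eq (x y : R) :
    x • (1 : Matrix (Fin 2) (Fin 2) R) + y • !![a, b; b, -a]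
      = !![x + y * a, y * b; y * b, x - y * a] := by
  rw [one_fin_two]
  ext i j
  fin_cases i <;> fin_cases j <;> simp [sub_eq_add_neg]

lemma det_smul_one_add_smul (x y : R) :
    (x • (1 : Matrix (Fin 2) (Fin 2) R) + y • !![a, b; b, -a]).det
      = x ^ 2 - (a ^ 2 + b ^ 2) * y ^ 2 := by
  rw [smul_one_add_smul_eq, det_fin_two_of]; ring

lemma adjugate_smul_one_add_smul_mul (x y u v : R) :
    (x • (1 : Matrix (Fin 2) (Fin 2) R) + y • !![a, b; b, -a]).adjugate
        * (u • 1 + v • !![a, b; b, -a])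
      = (x * u - (a ^ 2 + b ^ 2) * y * v) • 1 + (x * v - y * u) • !![a, b; b, -a] := by
  simp only [smul_one_add_smul_eq, adjugate_fin_two_of, mul_fin_two]
  ext i j
  fin_cases i <;> fin_cases j <;> simp <;> ring

end

theorem stmt_4_general (a b r : ℝ)
    (E E' F : Matrix (Fin 2) (Fin 2) ℝ)
    (hE : E = Real.cosh r • (1 : Matrix (Fin 2) (Fin 2) ℝ)
      + Real.sinh r • (!![a, b; b, -a] : Matrix (Fin 2) (Fin 2) ℝ))
    (hE' : E' = Real.sinh r • (1 : Matrix (Fin 2) (Fin 2) ℝ)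
      + Real.cosh r • (!![a, b; b, -a] : Matrix (Fin 2) (Fin 2) ℝ))
    (hF : F = E⁻¹ * E') :
    F = (1 + (1 - (a ^ 2 + b ^ 2)) * Real.sinh r ^ 2)⁻¹ •
        (!![(1 / 2) * Real.sinh (2 * r) * (1 - (a ^ 2 + b ^ 2)) + a, b;
            b, (1 / 2) * Real.sinh (2 * r) * (1 - (a ^ 2 + b ^ 2)) - a]
          : Matrix (Fin 2) (Fin 2) ℝ) ∧
    F.trace = Real.sinh (2 * r) * (1 - (a ^ 2 + b ^ 2))
      / (1 + (1 - (a ^ 2 + b ^ 2)) * Real.sinh r ^ 2) := by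
  have hF' : F = (1 + (1 - (a ^ 2 + b ^ 2)) * sinh r ^ 2)⁻¹ •
      !![(1 / 2) * sinh (2 * r) * (1 - (a ^ 2 + b ^ 2)) + a, b;
         b, (1 / 2) * sinh (2 * r) * (1 - (a ^ 2 + b ^ 2)) - a] := by
    have hdet : cosh r ^ 2 - (a ^ 2 + b ^ 2) * sinh r ^ 2
        = 1 + (1 - (a ^ 2 + b ^ 2)) * sinh r ^ 2 := by
      linear_combination cosh_sq_sub_sinh_sq r
    have hscalar : cosh r * sinh r - (a ^ 2 + b ^ 2) * sinh r * cosh r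
        = 1 / 2 * sinh (2 * r) * (1 - (a ^ 2 + b ^ 2)) := by
      rw [sinh_two_mul]; ring
    have hS : cosh r * cosh r - sinh r * sinh r = 1 := by
      linear_combination cosh_sq_sub_sinh_sq r
    rw [hF, hE, hE', inv_def, Ring.inverse_eq_inv', smul_mul_assoc, det_smul_one_add_smul, hdet,
      adjugate_smul_one_add_smul_mul, hscalar, hS, smul_one_add_smul_eq]
    simp only [one_mul]
  refine ⟨hF', ?_⟩
  rw [hF', trace_smul, trace_fin_two_of, smul_eq_mul, div_eq_inv_mul]
  ring

theorem stmt_4 (a b r : ℝ) (hlt : a ^ 2 + b ^ 2 < 1)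
    (E E' F : Matrix (Fin 2) (Fin 2) ℝ)
    (hE : E = Real.cosh r • (1 : Matrix (Fin 2) (Fin 2) ℝ)
      + Real.sinh r • (!![a, b; b, -a] : Matrix (Fin 2) (Fin 2) ℝ))
    (hE' : E' = Real.sinh r • (1 : Matrix (Fin 2) (Fin 2) ℝ)
      + Real.cosh r • (!![a, b; b, -a] : Matrix (Fin 2) (Fin 2) ℝ))
    (hF : F = E⁻¹ * E') :
    F = (1 + (1 - (a ^ 2 + b ^ 2)) * Real.sinh r ^ 2)⁻¹ •
        (!![(1 / 2) * Real.sinh (2 * r) * (1 - (a ^ 2 + b ^ 2)) + a, b;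
            b, (1 / 2) * Real.sinh (2 * r) * (1 - (a ^ 2 + b ^ 2)) - a]
          : Matrix (Fin 2) (Fin 2) ℝ) ∧
    F.trace = Real.sinh (2 * r) * (1 - (a ^ 2 + b ^ 2))
      / (1 + (1 - (a ^ 2 + b ^ 2)) * Real.sinh r ^ 2) :=
  stmt_4_general a b r E E' F hE hE' hF
end

section
/- Let c ∈ [0,2), λ ∈ [0,1), and set r̂_c = tanh⁻¹( c / (1 - λ² + √((1-λ²)² + c²λ²)) ). Then for all r ≥ r̂_c one has 2(1-λ²)tanh(r)/(1 - λ²tanh²(r)) ≥ c; i.e. the mean curvature of the equidistant surface Σ(r) is at least c whenever r ≥ r̂_c. -/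
/-- Inverse hyperbolic tangent, defined on `(-1, 1)`. -/
noncomputable def artanh (x : ℝ) : ℝ := (1 / 2) * Real.log ((1 + x) / (1 - x))

/-!
The map `t ↦ 2(1 - λ²)t / (1 - λ²t²)` is increasing on `[0, 1)`, and `tanh r̂_c` is the nonnegative
root of `λ²c t² + 2(1 - λ²)t = c`, i.e. the point where this map equals `c`. Since `tanh` is
increasing, `r ≥ r̂_c` gives `tanh r ≥ tanh r̂_c`, hence `H(r) ≥ c`.
-/

open Set

lemma artanh_eq_real_artanh {x : ℝ} (hx : x ∈ Icc (-1) 1) : artanh x = Real.artanh x :=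
  (Real.artanh_eq_half_log hx).symm

lemma le_tanh_of_artanh_le {t r : ℝ} (ht : t ∈ Ioo (-1) 1) (h : artanh t ≤ r) :
    t ≤ Real.tanh r := by
  rw [artanh_eq_real_artanh (Ioo_subset_Icc_self ht)] at h
  rwa [← Real.artanh_le_artanh_iff ht ⟨Real.neg_one_lt_tanh r, Real.tanh_lt_one r⟩,
    Real.artanh_tanh]

/-- `c / (b + √(b² + μc²))` is the rationalized form of the nonnegative root
`(√(b² + μc²) - b) / (μc)` of `μc t² + 2b t = c`. -/
lemma quadratic_root_eq {μ b c : ℝ} (hμ : 0 ≤ μ) (hb : 0 < b) :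
    μ * c * (c / (b + √(b ^ 2 + c ^ 2 * μ))) ^ 2
      + 2 * b * (c / (b + √(b ^ 2 + c ^ 2 * μ))) = c := by
  have hsq : √(b ^ 2 + c ^ 2 * μ) ^ 2 = b ^ 2 + c ^ 2 * μ := Real.sq_sqrt (by positivity)
  have hden : b + √(b ^ 2 + c ^ 2 * μ) ≠ 0 := by positivity
  generalize √(b ^ 2 + c ^ 2 * μ) = S at hsq hden ⊢
  field_simp
  linear_combination (-c) * hsq

/-- At `t = 1` the left side `μc + 2(1 - μ)` exceeds `c` as soon as `c < 2`, so the root lies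
below `1`. -/
lemma lt_one_of_quadratic_root {μ c t : ℝ} (hμ0 : 0 ≤ μ) (hμ1 : μ < 1) (hc0 : 0 ≤ c)
    (hc2 : c < 2) (hroot : μ * c * t ^ 2 + 2 * (1 - μ) * t = c) : t < 1 := by
  by_contra! ht
  have : μ * c ≤ μ * c * t ^ 2 := le_mul_of_one_le_right (by positivity) (one_le_pow₀ ht)
  nlinarith

/-- Given the root equation, `2bt - c(1 - μt²)` factors as `(t - s)(2b + μc(t + s))`. -/
lemma le_div_of_quadratic_root_le {μ b c s t : ℝ} (hμ : 0 ≤ μ) (hb : 0 ≤ b) (hc : 0 ≤ c)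
    (hs : 0 ≤ s) (hst : s ≤ t) (hden : 0 < 1 - μ * t ^ 2)
    (hroot : μ * c * s ^ 2 + 2 * b * s = c) :
    c ≤ 2 * b * t / (1 - μ * t ^ 2) := by
  rw [le_div_iff₀ hden]
  have hfactor : 2 * b * t - c * (1 - μ * t ^ 2) = (t - s) * (2 * b + μ * c * (t + s)) := by
    linear_combination hroot
  have hnonneg : 0 ≤ (t - s) * (2 * b + μ * c * (t + s)) :=
    mul_nonneg (sub_nonneg.mpr hst)
      (add_nonneg (by positivity) (mul_nonneg (mul_nonneg hμ hc) (by linarith)))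
  linarith

theorem stmt_7 (c lam : ℝ) (hc0 : 0 ≤ c) (hc2 : c < 2) (hl0 : 0 ≤ lam) (hl1 : lam < 1)
    (r : ℝ)
    (hr : r ≥ artanh (c / (1 - lam ^ 2
      + Real.sqrt ((1 - lam ^ 2) ^ 2 + c ^ 2 * lam ^ 2)))) :
    2 * (1 - lam ^ 2) * Real.tanh r / (1 - lam ^ 2 * Real.tanh r ^ 2) ≥ c := by
  set t₀ := c / (1 - lam ^ 2 + Real.sqrt ((1 - lam ^ 2) ^ 2 + c ^ 2 * lam ^ 2))
  have hlam_sq : lam ^ 2 < 1 := by nlinarith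
  have hroot : lam ^ 2 * c * t₀ ^ 2 + 2 * (1 - lam ^ 2) * t₀ = c :=
    quadratic_root_eq (sq_nonneg lam) (by linarith)
  have ht₀_nonneg : 0 ≤ t₀ := div_nonneg hc0 (by positivity)
  have ht₀_lt_one : t₀ < 1 :=
    lt_one_of_quadratic_root (sq_nonneg lam) hlam_sq hc0 hc2 hroot
  have ht₀_le : t₀ ≤ Real.tanh r := le_tanh_of_artanh_le ⟨by linarith, ht₀_lt_one⟩ hr
  have hden : 0 < 1 - lam ^ 2 * Real.tanh r ^ 2 := by
    nlinarith [Real.tanh_sq_lt_one r, sq_nonneg (Real.tanh r), sq_nonneg lam]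
  exact le_div_of_quadratic_root_le (sq_nonneg lam) (by linarith) hc0 ht₀_nonneg ht₀_le hden hroot
end

section
/- For all c ∈ [0,2) and all λ ∈ [0,1), one has c / (1 - λ² + √((1-λ²)² + c²λ²)) ≤ c / (2 - (2 - c²/2)·λ²); that is, tanh(r̂_c) ≤ tanh(r̃_c) where r̂_c = tanh⁻¹(c/(1-λ²+√((1-λ²)²+c²λ²))) and r̃_c = tanh⁻¹(c/(2-(2-c²/2)λ²)). -/
theorem stmt_8 (c lam : ℝ) (hc0 : 0 ≤ c) (hc2 : c < 2) (hl0 : 0 ≤ lam) (hl1 : lam < 1) :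
    c / (1 - lam ^ 2 + Real.sqrt ((1 - lam ^ 2) ^ 2 + c ^ 2 * lam ^ 2))
      ≤ c / (2 - (2 - c ^ 2 / 2) * lam ^ 2) := by
  have hl2 : lam ^ 2 < 1 := by nlinarith
  have hpos : 0 < 2 - (2 - c ^ 2 / 2) * lam ^ 2 := by nlinarith
  have hsq : 1 - lam ^ 2 + c ^ 2 * lam ^ 2 / 2
      ≤ Real.sqrt ((1 - lam ^ 2) ^ 2 + c ^ 2 * lam ^ 2) := by
    rw [show (1 : ℝ) - lam ^ 2 + c ^ 2 * lam ^ 2 / 2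
        = Real.sqrt ((1 - lam ^ 2 + c ^ 2 * lam ^ 2 / 2) ^ 2) from
      (Real.sqrt_sq (by nlinarith)).symm]
    apply Real.sqrt_le_sqrt
    nlinarith [mul_nonneg (sq_nonneg (c * lam ^ 2)) (show (0:ℝ) ≤ 4 - c ^ 2 by nlinarith)]
  have hden : 2 - (2 - c ^ 2 / 2) * lam ^ 2
      ≤ 1 - lam ^ 2 + Real.sqrt ((1 - lam ^ 2) ^ 2 + c ^ 2 * lam ^ 2) := by
    nlinarith
  exact div_le_div_of_nonneg_left hc0 hpos hden |>.trans_eq rfl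
end

section
/- Let τ > 0 and let w: [T₁,T₂] → ℝ be a differentiable function satisfying w'(t) ≥ -τ·tanh(w(t) - r) for a constant r. Then for all t ∈ [T₁,T₂], sinh(w(t) - r) ≥ e^{-τ(t-T₁)}·sinh(w(T₁) - r); equivalently w(t) ≥ sinh⁻¹(e^{-τ(t-T₁)} sinh(w(T₁)-r)) + r. -/
/-!
Since `d/ds sinh (w s - r) = cosh (w s - r) * w' s ≥ -τ * sinh (w s - r)`, the integrating factor
`exp (τ (s - T₁))` makes `s ↦ exp (τ (s - T₁)) * sinh (w s - r)` nondecreasing; comparing its values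
at `T₁` and `t` gives the bound on `sinh (w t - r)`, and applying the increasing function `arsinh`
gives the bound on `w t`.
-/

open Real Set

theorem Real.cosh_mul_tanh (x : ℝ) : cosh x * tanh x = sinh x := by
  rw [tanh_eq_sinh_div_cosh, mul_div_cancel₀ _ (cosh_pos x).ne']

theorem hasDerivAt_exp_mul_sinh_sub {w : ℝ → ℝ} {w' τ r a s : ℝ} (hw : HasDerivAt w w' s) :
    HasDerivAt (fun s ↦ exp (τ * (s - a)) * sinh (w s - r))
      (exp (τ * (s - a)) * cosh (w s - r) * (w' + τ * tanh (w s - r))) s := by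
  have hexp : HasDerivAt (fun s ↦ exp (τ * (s - a))) (exp (τ * (s - a)) * τ) s := by
    simpa using (((hasDerivAt_id s).sub_const a).const_mul τ).exp
  have hsinh : HasDerivAt (fun s ↦ sinh (w s - r)) (cosh (w s - r) * w') s :=
    (hasDerivAt_sinh _).comp s (hw.sub_const r)
  refine (hexp.mul hsinh).congr_deriv ?_
  linear_combination -(exp (τ * (s - a)) * τ) * cosh_mul_tanh (w s - r)

theorem monotoneOn_exp_mul_sinh_sub {w w' : ℝ → ℝ} {τ r a b : ℝ}
    (hderiv : ∀ s ∈ Icc a b, HasDerivAt w (w' s) s)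
    (hineq : ∀ s ∈ Icc a b, -τ * tanh (w s - r) ≤ w' s) :
    MonotoneOn (fun s ↦ exp (τ * (s - a)) * sinh (w s - r)) (Icc a b) := by
  have hd := fun s (hs : s ∈ Icc a b) ↦ hasDerivAt_exp_mul_sinh_sub (τ := τ) (r := r) (a := a)
    (hderiv s hs)
  refine monotoneOn_of_hasDerivWithinAt_nonneg (convex_Icc a b)
    (fun s hs ↦ (hd s hs).continuousAt.continuousWithinAt)
    (fun s hs ↦ (hd s (interior_subset hs)).hasDerivWithinAt) fun s hs ↦ ?_
  have hs' := interior_subset hs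
  have hgap : 0 ≤ w' s + τ * tanh (w s - r) := by linarith [hineq s hs']
  positivity

theorem exp_neg_mul_sinh_sub_le {w w' : ℝ → ℝ} {τ r a b : ℝ}
    (hderiv : ∀ s ∈ Icc a b, HasDerivAt w (w' s) s)
    (hineq : ∀ s ∈ Icc a b, -τ * tanh (w s - r) ≤ w' s) {t : ℝ} (ht : t ∈ Icc a b) :
    exp (-τ * (t - a)) * sinh (w a - r) ≤ sinh (w t - r) := by
  have hmono := monotoneOn_exp_mul_sinh_sub hderiv hineq (left_mem_Icc.2 (ht.1.trans ht.2)) ht ht.1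
  simp only [sub_self, mul_zero, exp_zero, one_mul] at hmono
  rwa [neg_mul, exp_neg, ← div_eq_inv_mul, div_le_iff₀' (exp_pos _)]

theorem stmt_11_general (τ r T₁ T₂ : ℝ) (w w' : ℝ → ℝ)
    (hderiv : ∀ t ∈ Set.Icc T₁ T₂, HasDerivAt w (w' t) t)
    (hineq : ∀ t ∈ Set.Icc T₁ T₂, w' t ≥ -τ * Real.tanh (w t - r)) :
    ∀ t ∈ Set.Icc T₁ T₂,
      Real.sinh (w t - r) ≥ Real.exp (-τ * (t - T₁)) * Real.sinh (w T₁ - r) ∧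
      w t ≥ Real.arsinh (Real.exp (-τ * (t - T₁)) * Real.sinh (w T₁ - r)) + r := by
  intro t ht
  have hsinh := exp_neg_mul_sinh_sub_le hderiv hineq ht
  have harsinh := (arsinh_le_arsinh.2 hsinh).trans_eq (arsinh_sinh _)
  exact ⟨hsinh, by linarith⟩

theorem stmt_11 (τ r T₁ T₂ : ℝ) (hτ : 0 < τ) (w w' : ℝ → ℝ)
    (hderiv : ∀ t ∈ Set.Icc T₁ T₂, HasDerivAt w (w' t) t)
    (hineq : ∀ t ∈ Set.Icc T₁ T₂, w' t ≥ -τ * Real.tanh (w t - r)) :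
    ∀ t ∈ Set.Icc T₁ T₂,
      Real.sinh (w t - r) ≥ Real.exp (-τ * (t - T₁)) * Real.sinh (w T₁ - r) ∧
      w t ≥ Real.arsinh (Real.exp (-τ * (t - T₁)) * Real.sinh (w T₁ - r)) + r :=
  stmt_11_general τ r T₁ T₂ w w' hderiv hineq
end

section
/- Let λ ∈ [0,1), c ∈ [0,2), and suppose λ² ≤ (2-c)/4. Then for any w ≥ r_c := tanh⁻¹(c/2): (2/(1-λ²))·(tanh(w) - tanh(r_c)) ≤ 4·tanh(w - r_c). -/
lemma tanh_lt_one' (x : ℝ) : Real.tanh x < 1 := by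
  rw [Real.tanh_eq_sinh_div_cosh, div_lt_one (Real.cosh_pos x)]
  nlinarith [Real.cosh_sub_sinh x, Real.exp_pos (-x)]

lemma neg_one_lt_tanh (x : ℝ) : -1 < Real.tanh x := by
  have := tanh_lt_one' (-x)
  rw [Real.tanh_neg] at this
  linarith

lemma tanh_nonneg' {x : ℝ} (hx : 0 ≤ x) : 0 ≤ Real.tanh x := by
  rw [Real.tanh_eq_sinh_div_cosh]
  exact div_nonneg (Real.sinh_nonneg_iff.2 hx) (Real.cosh_pos x).le

lemma tanh_sub_tanh (w r : ℝ) :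
    Real.tanh w - Real.tanh r
      = Real.tanh (w - r) * (1 - Real.tanh w * Real.tanh r) := by
  rw [Real.tanh_eq_sinh_div_cosh, Real.tanh_eq_sinh_div_cosh,
    Real.tanh_eq_sinh_div_cosh, Real.sinh_sub, Real.cosh_sub]
  have hw := (Real.cosh_pos w).ne'
  have hr := (Real.cosh_pos r).ne'
  have hwr : Real.cosh w * Real.cosh r - Real.sinh w * Real.sinh r ≠ 0 := by
    rw [← Real.cosh_sub]; exact (Real.cosh_pos _).ne'
  field_simp

theorem stmt_12 (c lam : ℝ) (hl0 : 0 ≤ lam) (hl1 : lam < 1) (hc0 : 0 ≤ c) (hc2 : c < 2)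
    (hlam : lam ^ 2 ≤ (2 - c) / 4) (w : ℝ) (hw : w ≥ artanh (c / 2)) :
    (2 / (1 - lam ^ 2)) * (Real.tanh w - Real.tanh (artanh (c / 2)))
      ≤ 4 * Real.tanh (w - artanh (c / 2)) := by
  set r := artanh (c / 2) with hr
  have hr0 : 0 ≤ r := by
    rw [hr, artanh]
    have h1 : (1 : ℝ) ≤ (1 + c / 2) / (1 - c / 2) := by
      rw [le_div_iff₀ (by linarith)]
      linarith
    have := Real.log_nonneg h1
    linarith
  have hB : 0 ≤ Real.tanh r := tanh_nonneg' hr0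
  have ht : 0 ≤ Real.tanh (w - r) := tanh_nonneg' (by linarith)
  have hAB : Real.tanh w - Real.tanh r
      = Real.tanh (w - r) * (1 - Real.tanh w * Real.tanh r) := tanh_sub_tanh w r
  have hA1 : Real.tanh w < 1 := tanh_lt_one' w
  have hB1 : Real.tanh r < 1 := tanh_lt_one' r
  have hAm : -1 < Real.tanh w := neg_one_lt_tanh w
  have hp : Real.tanh w * Real.tanh r ≤ 1 := by nlinarith
  have hABnn : 0 ≤ Real.tanh w - Real.tanh r := by nlinarith
  have hA : 0 ≤ Real.tanh w := by linarith
  have hle : Real.tanh w - Real.tanh r ≤ Real.tanh (w - r) := by nlinarith [mul_nonneg ht (mul_nonneg hA hB)]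
  have hlam2 : 1 - lam ^ 2 ≥ 1 / 2 := by nlinarith
  have hcoef : 2 / (1 - lam ^ 2) ≤ 4 := by
    rw [div_le_iff₀ (by linarith)]
    linarith
  have hpos : 0 < 1 - lam ^ 2 := by linarith
  calc (2 / (1 - lam ^ 2)) * (Real.tanh w - Real.tanh r)
      ≤ 4 * (Real.tanh w - Real.tanh r) :=
        mul_le_mul_of_nonneg_right hcoef hABnn
    _ ≤ 4 * Real.tanh (w - r) := by linarith
end
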